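/- Let n ≥ 1 and δ_c ∈ ℂ. The complex matrix obtained from Γ_n by evaluating δ at δ_c is invertible if and only if δ_c ∉ {0, 1, …, n−1}. -/

import Mathlib

/- Set partitions of a finite set are modelled as equivalence relations (`Setoid`);
   `nBlocks` is the number of blocks (equivalence classes), `p ⊔ q` is the join.
   `S n l` is the Stirling number of the second kind, `B n` the Bell number, and
   `Gram n` is the Gram matrix of the spine standard module of the partition algebra,
   over `ℂ[δ]` (with `δ = Polynomial.X`). -/

open scoped Classical

noncomputable section

def nBlocks {X : Type*} (s : Setoid X) : ℕ := Nat.card (Quotient s)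

def S (n l : ℕ) : ℕ := Nat.card {s : Setoid (Fin n) // nBlocks s = l}

def B (n : ℕ) : ℕ := ∑ l ∈ Finset.Icc 1 n, S n l

instance {X : Type*} [Finite X] : Finite (Setoid X) :=
  Finite.of_injective (fun s : Setoid X => (s.r : X → X → Prop)) fun s t h => by
    cases s; cases t; cases h; rfl

noncomputable instance (n : ℕ) : Fintype (Setoid (Fin n)) :=
  Fintype.ofFinite _

def Gram (n : ℕ) : Matrix (Setoid (Fin n)) (Setoid (Fin n)) (Polynomial ℂ) :=
  Matrix.of fun p q => (Polynomial.X : Polynomial ℂ) ^ nBlocks (p ⊔ q)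

/-!
Counting the maps from a finite set to an `m`-element set that are constant on the blocks of a
partition `t`, grouped by their kernel, gives `m ^ b(t) = ∑_{r ≥ t} m (m - 1) ⋯ (m - b(r) + 1)`,
hence the polynomial identity `δ ^ b(t) = ∑_{r ≥ t} (δ)_{b(r)}` with falling factorials. Taking
`t = p ⊔ q` factors `Γ_n = Z D Zᵀ`, where `Z` is the zeta matrix of the partition lattice and `D`
the diagonal matrix of the `(δ)_{b(r)}`. As `Z` is unitriangular along a linear extension of the
order, `det Γ_n = ∏_r (δ)_{b(r)}`, which vanishes exactly at the `k < max_r b(r) = n`.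
-/

open Finset Matrix Polynomial

theorem Matrix.det_of_blockTriangular_injective {α β R : Type*} [Fintype α] [DecidableEq α]
    [LinearOrder β] [CommRing R] {M : Matrix α α R} {b : α → β} (hb : Function.Injective b)
    (hM : M.BlockTriangular b) : M.det = ∏ i, M i i := by
  rw [hM.det, prod_image fun i _ j _ hij => hb hij]
  refine prod_congr rfl fun i _ => ?_
  let _ : Unique {j // b j = b i} := ⟨⟨⟨i, rfl⟩⟩, fun j => Subtype.ext (hb j.2)⟩
  exact det_unique _

def zetaMatrix (R α : Type*) [Zero R] [One R] [LE α] [DecidableLE α] : Matrix α α R :=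
  of fun p r => if p ≤ r then 1 else 0

section ZetaMatrix

variable {α R : Type*} [Fintype α] [DecidableEq α] [CommRing R]

theorem det_zetaMatrix [PartialOrder α] [DecidableLE α] : (zetaMatrix R α).det = 1 := by
  rw [det_of_blockTriangular_injective (b := toLinearExtension) (fun _ _ h => h)]
  · simp [zetaMatrix]
  · intro p r hrp
    simp only [zetaMatrix, of_apply, ite_eq_right_iff]
    exact fun hpr => ((toLinearExtension.monotone hpr).not_gt hrp).elim

theorem zetaMatrix_mul_diagonal_mul_transpose [SemilatticeSup α] [DecidableLE α] (d : α → R) :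
    zetaMatrix R α * diagonal d * (zetaMatrix R α)ᵀ =
      of fun p q => ∑ r with p ⊔ q ≤ r, d r := by
  ext p q
  rw [mul_apply, of_apply, sum_filter]
  simp only [mul_diagonal, transpose_apply, zetaMatrix, of_apply]
  refine sum_congr rfl fun r _ => ?_
  by_cases hp : p ≤ r <;> by_cases hq : q ≤ r <;> simp [hp, hq]

theorem det_of_sum_sup_le [SemilatticeSup α] [DecidableLE α] (d : α → R) :
    (of fun p q : α => ∑ r with p ⊔ q ≤ r, d r).det = ∏ r, d r := by
  rw [← zetaMatrix_mul_diagonal_mul_transpose, det_mul, det_mul, det_transpose, det_zetaMatrix,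
    det_diagonal, one_mul, mul_one]

end ZetaMatrix

theorem descPochhammer_eval_ne_zero_iff {R : Type*} [CommRing R] [IsDomain R] (n : ℕ) (x : R) :
    (descPochhammer R n).eval x ≠ 0 ↔ ∀ k < n, x ≠ k := by
  simp_rw [descPochhammer_eval_eq_prod_range, prod_ne_zero_iff, mem_range, sub_ne_zero]

section SetPartitions

variable {α : Type*}

theorem nBlocks_antitone [Finite α] : Antitone (nBlocks (X := α)) := fun _ _ h =>
  Nat.card_le_card_of_surjective (Setoid.map_of_le h)
    (Quotient.ind fun a => ⟨Quotient.mk _ a, rfl⟩)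

theorem nBlocks_bot : nBlocks (⊥ : Setoid α) = Nat.card α :=
  Nat.card_congr Setoid.quotientBotEquiv

def kerEqEquivEmbedding (r : Setoid α) (W : Type*) :
    {f : α → W // Setoid.ker f = r} ≃ (Quotient r ↪ W) :=
  (Equiv.subtypeSubtypeEquivSubtype fun h => h.ge).symm.trans <|
    ((Setoid.liftEquiv r).subtypeEquiv fun f =>
      (Setoid.lift_injective_iff_ker_eq_of_le f.2).symm).trans
      (Equiv.subtypeInjectiveEquivEmbedding _ _)

variable [Fintype α] [Fintype (Setoid α)]

theorem card_pow_nBlocks_eq_sum_descFactorial (W : Type*) [Fintype W] (t : Setoid α) :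
    Fintype.card W ^ nBlocks t = ∑ r with t ≤ r, (Fintype.card W).descFactorial (nBlocks r) := by
  calc Fintype.card W ^ nBlocks t = #{f : α → W | t ≤ Setoid.ker f} := by
        rw [← Fintype.card_subtype, Fintype.card_congr (Setoid.liftEquiv t), Fintype.card_fun,
          nBlocks, Nat.card_eq_fintype_card]
    _ = ∑ r with t ≤ r, #{f : α → W | Setoid.ker f = r} := by
        rw [card_eq_sum_card_fiberwise (f := Setoid.ker) (t := {r | t ≤ r})
          fun f hf => by simpa using hf]
        refine sum_congr rfl fun r hr => ?_
        rw [filter_filter]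
        congr 1
        exact filter_congr fun f _ => and_iff_right_of_imp fun h => h ▸ (mem_filter.1 hr).2
    _ = _ := by
        refine sum_congr rfl fun r _ => ?_
        rw [← Fintype.card_subtype, Fintype.card_congr (kerEqEquivEmbedding r W),
          Fintype.card_embedding_eq, nBlocks, Nat.card_eq_fintype_card]

theorem pow_nBlocks_eq_sum_descPochhammer {R : Type*} [CommRing R] [IsDomain R] [CharZero R]
    (t : Setoid α) : (X : R[X]) ^ nBlocks t = ∑ r with t ≤ r, descPochhammer R (nBlocks r) := by
  refine eq_of_infinite_eval_eq _ _
    ((Set.infinite_range_of_injective Nat.cast_injective).mono ?_)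
  rintro _ ⟨m, rfl⟩
  have := card_pow_nBlocks_eq_sum_descFactorial (Fin m) t
  rw [Fintype.card_fin] at this
  simp only [Set.mem_ofPred_eq, eval_pow, eval_X, eval_finsetSum,
    descPochhammer_eval_eq_descFactorial]
  exact_mod_cast this

end SetPartitions

theorem gram_map_eval (n : ℕ) (x : ℂ) :
    (Gram n).map (eval x) =
      of fun p q : Setoid (Fin n) => ∑ r with p ⊔ q ≤ r, (descPochhammer ℂ (nBlocks r)).eval x := by
  ext p q
  rw [map_apply, Gram, of_apply, of_apply, pow_nBlocks_eq_sum_descPochhammer, eval_finsetSum]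

theorem det_gram_map_eval (n : ℕ) (x : ℂ) :
    ((Gram n).map (eval x)).det = ∏ r : Setoid (Fin n), (descPochhammer ℂ (nBlocks r)).eval x := by
  rw [gram_map_eval, det_of_sum_sup_le]

theorem gram_eval_isUnit_iff_general (n : ℕ) (δc : ℂ) :
    IsUnit ((Gram n).map (Polynomial.eval δc)) ↔ ∀ k : ℕ, k < n → δc ≠ (k : ℂ) := by
  have hbot : nBlocks (⊥ : Setoid (Fin n)) = n := by rw [nBlocks_bot, Nat.card_fin]
  simp_rw [isUnit_iff_isUnit_det, isUnit_iff_ne_zero, det_gram_map_eval, prod_ne_zero_iff,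
    descPochhammer_eval_ne_zero_iff]
  exact ⟨fun h k hk => h ⊥ (mem_univ _) k (by rwa [hbot]),
    fun h r _ k hk => h k (hk.trans_le ((nBlocks_antitone bot_le).trans_eq hbot))⟩

theorem gram_eval_isUnit_iff (n : ℕ) (hn : 1 ≤ n) (δc : ℂ) :
    IsUnit ((Gram n).map (Polynomial.eval δc)) ↔ ∀ k : ℕ, k < n → δc ≠ (k : ℂ) :=
  gram_eval_isUnit_iff_general n δc

end
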